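/- In the wire gadget: let t ≥ 2, let c₁, …, c_{t-1} be pairwise disjoint nonempty finite sets, and let s₁, …, s_t be sets with c_i ⊆ s_i ∩ s_{i+1} and s_j ∩ c_i = ∅ for j ∉ {i, i+1}. If S ⊆ {s₁, …, s_t} covers every point of ⋃ c_i uniquely, then membership of s₁ in S determines membership of every s_j in S: s_j ∈ S iff j has the same parity as 1 when s₁ ∈ S, and iff j has the same parity as 2 when s₁ ∉ S. -/

import Mathlib

/-!
Each cloud `cᵢ` is nonempty and meets only `sᵢ` and `sᵢ₊₁`, so unique coverage of one of
its points forces exactly one of `i`, `i + 1` into the selection. Consecutive indices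
therefore alternate in and out of the selection, and the parity pattern follows by
induction along the wire.
-/

theorem mem_iff_not_mem_succ_of_existsUnique {α : Type*} {s : ℕ → Set α} {T : Set ℕ}
    {p : α} {i : ℕ} (hi : p ∈ s i) (hsucc : p ∈ s (i + 1))
    (hother : ∀ j ∈ T, j ≠ i → j ≠ i + 1 → p ∉ s j)
    (huniq : ∃! j, j ∈ T ∧ p ∈ s j) :
    i ∈ T ↔ i + 1 ∉ T := by
  obtain ⟨j, ⟨hjT, hpj⟩, hj_unique⟩ := huniq
  constructor
  · intro hiT hsuccT
    have hij : i = j := hj_unique i ⟨hiT, hi⟩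
    have hsuccj : i + 1 = j := hj_unique (i + 1) ⟨hsuccT, hsucc⟩
    omega
  · intro hsuccT
    by_contra hiT
    exact hother j hjT (by rintro rfl; exact hiT hjT) (by rintro rfl; exact hsuccT hjT) hpj

theorem mem_iff_mod_two_eq_of_alternating {T : Set ℕ} {a b : ℕ}
    (halt : ∀ i, a ≤ i → i < b → (i ∈ T ↔ i + 1 ∉ T)) {j : ℕ} (haj : a ≤ j) (hjb : j ≤ b) :
    (j ∈ T ↔ a ∈ T) ↔ j % 2 = a % 2 := by
  induction j, haj using Nat.le_induction with
  | base => simp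
  | succ n han ih =>
    have hflip := halt n han (by omega)
    have hparity : (n + 1) % 2 = a % 2 ↔ ¬ n % 2 = a % 2 := by omega
    have := ih (by omega)
    tauto

theorem wire_unique_cover_parity_general {α : Type*} (t : ℕ)
    (s : ℕ → Set α) (c : ℕ → Set α)
    (hne : ∀ i, 1 ≤ i → i ≤ t - 1 → (c i).Nonempty)
    (hsub : ∀ i, 1 ≤ i → i ≤ t - 1 → c i ⊆ s i ∩ s (i + 1))
    (hout : ∀ i j, 1 ≤ i → i ≤ t - 1 → 1 ≤ j → j ≤ t → j ≠ i → j ≠ i + 1 →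
      Disjoint (s j) (c i))
    (T : Set ℕ) (hT : ∀ j ∈ T, 1 ≤ j ∧ j ≤ t)
    (huniq : ∀ i, 1 ≤ i → i ≤ t - 1 → ∀ p ∈ c i, ∃! j, j ∈ T ∧ p ∈ s j) :
    ∀ j, 1 ≤ j → j ≤ t →
      ((1 ∈ T → (j ∈ T ↔ j % 2 = 1)) ∧ (1 ∉ T → (j ∈ T ↔ j % 2 = 0))) := by
  have halt : ∀ i, 1 ≤ i → i < t → (i ∈ T ↔ i + 1 ∉ T) := by
    intro i hi1 hit
    obtain ⟨p, hp⟩ := hne i hi1 (by omega)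
    have hps := hsub i hi1 (by omega) hp
    refine mem_iff_not_mem_succ_of_existsUnique hps.1 hps.2 (fun j hjT hji hjsucc hpj => ?_)
      (huniq i hi1 (by omega) p hp)
    exact Set.disjoint_left.mp
      (hout i j hi1 (by omega) (hT j hjT).1 (hT j hjT).2 hji hjsucc) hpj hp
  intro j hj1 hjt
  have hparity := mem_iff_mod_two_eq_of_alternating halt hj1 hjt
  have hmod : j % 2 = 0 ↔ ¬ j % 2 = 1 := by omega
  constructor <;> intro h1 <;> tauto

/-- In the wire gadget, if the selection `T ⊆ {1, …, t}` covers every cloud point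
uniquely, then membership of `s 1` determines all the others: if `1 ∈ T` then exactly
the odd-indexed sets are selected, and if `1 ∉ T` then exactly the even-indexed sets
are selected. -/
theorem wire_unique_cover_parity {α : Type*} (t : ℕ) (ht : 2 ≤ t)
    (s : ℕ → Set α) (c : ℕ → Set α)
    (hne : ∀ i, 1 ≤ i → i ≤ t - 1 → (c i).Nonempty)
    (hdisj : ∀ i j, 1 ≤ i → i ≤ t - 1 → 1 ≤ j → j ≤ t - 1 → i ≠ j → Disjoint (c i) (c j))
    (hsub : ∀ i, 1 ≤ i → i ≤ t - 1 → c i ⊆ s i ∩ s (i + 1))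
    (hout : ∀ i j, 1 ≤ i → i ≤ t - 1 → 1 ≤ j → j ≤ t → j ≠ i → j ≠ i + 1 →
      Disjoint (s j) (c i))
    (T : Set ℕ) (hT : ∀ j ∈ T, 1 ≤ j ∧ j ≤ t)
    (huniq : ∀ i, 1 ≤ i → i ≤ t - 1 → ∀ p ∈ c i, ∃! j, j ∈ T ∧ p ∈ s j) :
    ∀ j, 1 ≤ j → j ≤ t →
      ((1 ∈ T → (j ∈ T ↔ j % 2 = 1)) ∧ (1 ∉ T → (j ∈ T ↔ j % 2 = 0))) :=
  wire_unique_cover_parity_general t s c hne hsub hout T hT huniq
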